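/- arXiv:1710.01157 — 2 statements merged into one kernel-verified Lean document; each statement's English description precedes it below -/
import Mathlib

section
/- Consider the cycle graph C_n (n ≥ 3) with standard weights and a vector potential α that is constant, α_e = t on every edge (oriented along the cycle). Then the constant function 1 is an eigenfunction of the discrete magnetic Laplacian Δ_α with eigenvalue 1 − cos t. Consequently, for every λ ∈ [0, 2] there exists a vector potential α with λ ∈ σ(Δ_α^{C_n}), i.e., the magnetic spectral gaps set of C_n is empty: ⋃_{α} σ(Δ_α^{C_n}) = [0, 2]. -/
open Matrix BigOperators

lemma key (t : ℝ) :
    (1 : ℂ) - (1 / 2 : ℂ) *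
      (Complex.exp (-(t : ℂ) * Complex.I) * 1 + Complex.exp ((t : ℂ) * Complex.I) * 1)
    = ((1 - Real.cos t : ℝ) : ℂ) := by
  have h : (Real.cos t : ℂ) = Complex.cos t := Complex.ofReal_cos t
  rw [Complex.ofReal_sub, Complex.ofReal_one, h, Complex.cos]
  ring

/-- On the cycle graph `C_n` (`n ≥ 3`, vertices `Fin (n+3)`, edge `e = v`
from `v` to `v+1`) with standard weights and constant vector potential `α_e = t`,
the discrete magnetic Laplacian acts on `f` by
`(Δ_α f)(v) = f v − (1/2)(e^{−it} f(v+1) + e^{it} f(v−1))`.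
The constant function `1` is an eigenfunction with eigenvalue `1 − cos t`, and
consequently every `λ ∈ [0,2]` lies in `σ(Δ_α)` for some potential: the magnetic
spectral gaps set of the cycle is empty. -/
theorem stmt5 (n : ℕ) :
    (∀ t : ℝ, ∀ v : Fin (n + 3),
      (fun (f : Fin (n + 3) → ℂ) (v : Fin (n + 3)) =>
          f v - (1 / 2 : ℂ) *
            (Complex.exp (-(t : ℂ) * Complex.I) * f (v + 1) +
             Complex.exp ((t : ℂ) * Complex.I) * f (v - 1)))
        (fun _ => 1) v
        = ((1 - Real.cos t : ℝ) : ℂ) * (fun _ : Fin (n + 3) => (1 : ℂ)) v) ∧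
    (∀ lam ∈ Set.Icc (0 : ℝ) 2, ∃ t : ℝ, ∀ v : Fin (n + 3),
      (fun (f : Fin (n + 3) → ℂ) (v : Fin (n + 3)) =>
          f v - (1 / 2 : ℂ) *
            (Complex.exp (-(t : ℂ) * Complex.I) * f (v + 1) +
             Complex.exp ((t : ℂ) * Complex.I) * f (v - 1)))
        (fun _ => 1) v
        = (lam : ℂ) * (fun _ : Fin (n + 3) => (1 : ℂ)) v) := by
  constructor
  · intro t v
    simpa using key t
  · intro lam hlam
    refine ⟨Real.arccos (1 - lam), fun v => ?_⟩
    have hc : Real.cos (Real.arccos (1 - lam)) = 1 - lam := by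
      apply Real.cos_arccos <;> [linarith [hlam.2]; linarith [hlam.1]]
    have := key (Real.arccos (1 - lam))
    simp only [hc] at this
    simpa using this.trans (by push_cast; ring)
end

section
/- For a finite weighted graph W = (G, m) with centre vertex v₀ and cycle edges A(v₀): Tr(Δ^{W⁻}) − Tr(Δ^{W⁺}) = ρ(v₀) − m(A(v₀))/m(v₀) − ∑_{e ∈ A(v₀)} m_e/m((v₀)_e), where W⁻ = (G − A(v₀), m) and W⁺ = (G − {v₀}, m) (vertex-virtualised: the principal submatrix deleting row and column of v₀). -/
open Matrix BigOperators

/-- Sum of edge weights over edges incident to `v` (loops counted twice). -/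
noncomputable def edgeSumAt {V E : Type*} [Fintype E] [DecidableEq V] (src tgt : E → V)
    (mE : E → ℝ) (v : V) : ℝ :=
  ∑ e : E, ((if src e = v then mE e else 0) + (if tgt e = v then mE e else 0))

/-- Relative weight `ρ(v) = m(E_v)/m(v)`. -/
noncomputable def rho {V E : Type*} [Fintype E] [DecidableEq V] (src tgt : E → V)
    (m : V → ℝ) (mE : E → ℝ) (v : V) : ℝ :=
  edgeSumAt src tgt mE v / m v

/-- Matrix of the discrete magnetic Laplacian (in the orthonormal basis
`m(v)^{-1/2} 1_v` of `ℓ²(V,m)`), with unimodular phases `z e` on the edges. -/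
noncomputable def dmlPhase {V E : Type*} [Fintype E] [DecidableEq V] (src tgt : E → V)
    (m : V → ℝ) (mE : E → ℝ) (z : E → ℂ) : Matrix V V ℂ :=
  fun u v =>
    (if u = v then ((rho src tgt m mE u : ℝ) : ℂ) else 0) -
      ((1 / (Real.sqrt (m u) * Real.sqrt (m v)) : ℝ) : ℂ) *
        ∑ e : E, (mE e : ℂ) *
          ((if src e = v ∧ tgt e = u then z e else 0) +
           (if tgt e = v ∧ src e = u then starRingEnd ℂ (z e) else 0))

/-- Discrete magnetic Laplacian with vector potential `α : E → ℝ`. -/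
noncomputable def dml {V E : Type*} [Fintype E] [DecidableEq V] (src tgt : E → V)
    (m : V → ℝ) (mE : E → ℝ) (α : E → ℝ) : Matrix V V ℂ :=
  dmlPhase src tgt m mE (fun e => Complex.exp ((α e : ℂ) * Complex.I))

/-- Real spectrum of a complex matrix. -/
noncomputable def realSpec {V : Type*} [Fintype V] [DecidableEq V] (M : Matrix V V ℂ) : Set ℝ :=
  {x : ℝ | (x : ℂ) ∈ spectrum ℂ M}

/-- Degree of a vertex in the multigraph (loops counted twice). -/
def mdeg {V E : Type*} [Fintype E] [DecidableEq V] (src tgt : E → V) (v : V) : ℕ :=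
  ∑ e : E, ((if src e = v then 1 else 0) + (if tgt e = v then 1 else 0))

/-- Simple graph underlying the multigraph restricted to the edge set `S`. -/
def multiGraph {V E : Type*} (src tgt : E → V) (S : Set E) : SimpleGraph V :=
  SimpleGraph.fromRel (fun u v => ∃ e ∈ S, src e = u ∧ tgt e = v)

/-- `G − A` is a tree: connected with `|E \ A| = |V| − 1`. -/
def isTreeAfter {V E : Type*} [Fintype V] [Fintype E] [DecidableEq E] (src tgt : E → V)
    (A : Finset E) : Prop :=
  (multiGraph src tgt {e | e ∉ A}).Connected ∧
    (Finset.univ.filter (fun e => e ∉ A)).card = Fintype.card V - 1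

/-- Magnetic spectral gaps set `[0, 2ρ_∞] \ ⋃_α σ(Δ_α)`. -/
noncomputable def msSet {V E : Type*} [Fintype V] [Fintype E] [DecidableEq V] [Nonempty V]
    (src tgt : E → V) (m : V → ℝ) (mE : E → ℝ) : Set ℝ :=
  Set.Icc 0 (2 * Finset.univ.sup' Finset.univ_nonempty (rho src tgt m mE)) \
    ⋃ (α : E → ℝ), realSpec (dml src tgt m mE α)

section Aux

lemma conn_step' {V : Type*} (G : SimpleGraph V) (hc : G.Connected) (r : V) :
    ∀ v : V, ∃ u : V, v ≠ r → G.Adj v u ∧ G.dist r u < G.dist r v := by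
  intro v
  by_cases hv : v = r
  · exact ⟨v, fun h => absurd hv h⟩
  · obtain ⟨p, hp⟩ := hc.exists_walk_length_eq_dist r v
    obtain ⟨u, hadj, q, hq⟩ := SimpleGraph.Walk.exists_eq_cons_of_ne hv p.reverse
    refine ⟨u, fun _ => ⟨hadj, ?_⟩⟩
    have h1 : G.dist r u ≤ q.reverse.length := SimpleGraph.dist_le _
    have h2 : q.length + 1 = p.length := by
      have := congrArg SimpleGraph.Walk.length hq
      simp [SimpleGraph.Walk.length_reverse] at this
      omega
    rw [SimpleGraph.Walk.length_reverse] at h1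
    omega

lemma no_loop_outside' {V E : Type*} [Fintype V] [Fintype E] [DecidableEq V] [DecidableEq E]
    (src tgt : E → V) (A : Finset E)
    (hc : (multiGraph src tgt {e | e ∉ A}).Connected)
    (hcard : (Finset.univ.filter (fun e : E => e ∉ A)).card = Fintype.card V - 1)
    {e₀ : E} (he₀ : e₀ ∉ A) (hloop : src e₀ = tgt e₀) : False := by
  classical
  set G := multiGraph src tgt {e | e ∉ A} with hG
  have hne : Nonempty V := hc.nonempty
  obtain ⟨r⟩ := hne
  choose u hu using conn_step' G hc r
  have hwit : ∀ v w : V, ∃ e : E, G.Adj v w →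
      e ∉ A ∧ src e ≠ tgt e ∧ s(v, w) = s(src e, tgt e) := by
    intro v w
    by_cases h : G.Adj v w
    · obtain ⟨hne', hrel⟩ := h
      rcases hrel with ⟨e, he, h1, h2⟩ | ⟨e, he, h1, h2⟩
      · exact ⟨e, fun _ => ⟨he, by rw [h1, h2]; exact hne', by rw [h1, h2]⟩⟩
      · exact ⟨e, fun _ => ⟨he, by rw [h1, h2]; exact fun hh => hne' hh.symm,
          by rw [h1, h2]; exact Sym2.eq_swap⟩⟩
    · exact ⟨e₀, fun hh => absurd hh h⟩
  choose F hF using hwit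
  set f : V → E := fun v => F v (u v) with hf
  have hinj : Set.InjOn f (Finset.univ.erase r : Finset V) := by
    intro v hv w hw hvw
    simp only [Finset.coe_erase, Set.mem_diff, Set.mem_singleton_iff] at hv hw
    obtain ⟨hav, hdv⟩ := hu v hv.2
    obtain ⟨haw, hdw⟩ := hu w hw.2
    obtain ⟨_, _, hsv⟩ := hF v (u v) hav
    obtain ⟨_, _, hsw⟩ := hF w (u w) haw
    have hvw' : F v (u v) = F w (u w) := hvw
    have : s(v, u v) = s(w, u w) := by rw [hsv, hsw, hvw']
    rw [Sym2.eq_iff] at this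
    rcases this with ⟨h1, _⟩ | ⟨h1, h2⟩
    · exact h1
    · exfalso
      rw [← h1] at hdw
      rw [h2] at hdv
      omega
  have hmaps : ∀ v ∈ (Finset.univ.erase r : Finset V),
      f v ∈ (Finset.univ.filter (fun e : E => e ∉ A)).erase e₀ := by
    intro v hv
    have hvne := Finset.ne_of_mem_erase hv
    obtain ⟨hav, _⟩ := hu v hvne
    obtain ⟨hA', hnl, _⟩ := hF v (u v) hav
    refine Finset.mem_erase.mpr ⟨?_, Finset.mem_filter.mpr ⟨Finset.mem_univ _, hA'⟩⟩
    intro h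
    exact hnl (by rw [show F v (u v) = e₀ from h]; exact hloop)
  have hcard1 : (Finset.univ.erase r : Finset V).card ≤
      ((Finset.univ.filter (fun e : E => e ∉ A)).erase e₀).card :=
    Finset.card_le_card_of_injOn f hmaps hinj
  have h1 : (Finset.univ.erase r : Finset V).card = Fintype.card V - 1 := by
    simp [Finset.card_erase_of_mem]
  have h2 : e₀ ∈ Finset.univ.filter (fun e : E => e ∉ A) :=
    Finset.mem_filter.mpr ⟨Finset.mem_univ _, he₀⟩
  have h3 : ((Finset.univ.filter (fun e : E => e ∉ A)).erase e₀).card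
      = Fintype.card V - 1 - 1 := by
    rw [Finset.card_erase_of_mem h2, hcard]
  have hVpos : 1 ≤ Fintype.card V := Fintype.card_pos_iff.mpr ⟨r⟩
  have hfc : 1 ≤ (Finset.univ.filter (fun e : E => e ∉ A)).card :=
    Finset.card_pos.mpr ⟨e₀, h2⟩
  omega

lemma dml_diag_eq' {V E : Type*} [Fintype E] [DecidableEq V] (src tgt : E → V)
    (m : V → ℝ) (w : E → ℝ) (u : V) (h : ∀ e, src e = u → tgt e = u → w e = 0) :
    dml src tgt m w (fun _ => 0) u u = ((rho src tgt m w u : ℝ) : ℂ) := by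
  unfold dml dmlPhase
  rw [if_pos rfl]
  have hz : (∑ e, (w e : ℂ) *
      ((if src e = u ∧ tgt e = u then Complex.exp (((0:ℝ) : ℂ) * Complex.I) else 0) +
       (if tgt e = u ∧ src e = u then
          starRingEnd ℂ (Complex.exp (((0:ℝ) : ℂ) * Complex.I)) else 0)))
      = 0 := by
    apply Finset.sum_eq_zero
    intro e _
    by_cases h1 : src e = u ∧ tgt e = u
    · rw [h e h1.1 h1.2]; simp
    · have h2 : ¬(tgt e = u ∧ src e = u) := fun hh => h1 ⟨hh.2, hh.1⟩
      rw [if_neg h1, if_neg h2]; simp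
  rw [hz, mul_zero, sub_zero]

lemma real_alg' {V E : Type*} [Fintype V] [Fintype E] [DecidableEq V] [DecidableEq E]
    (src tgt : E → V) (m : V → ℝ) (mE : E → ℝ) (v₀ : V) (A : Finset E)
    (hA : ∀ e ∈ A, src e = v₀ ∨ tgt e = v₀) :
    (∑ u : V, rho src tgt m (fun e => if e ∈ A then 0 else mE e) u) -
      ∑ v : {v : V // v ≠ v₀}, rho src tgt m mE (v : V) =
    rho src tgt m mE v₀ - (∑ e ∈ A, mE e) / m v₀ -
      ∑ e ∈ A, mE e / m (if src e = v₀ then tgt e else src e) := by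
  classical
  set g : E → V → ℝ := fun e u =>
    (if src e = u then mE e else 0) + (if tgt e = u then mE e else 0) with hg
  have hsub : ∑ v : {v : V // v ≠ v₀}, rho src tgt m mE (v : V) =
      ∑ u : V, rho src tgt m mE u - rho src tgt m mE v₀ := by
    rw [← Finset.sum_erase_eq_sub (Finset.mem_univ v₀)]
    exact (Finset.sum_subtype _ (fun x => by simp [Finset.mem_erase]) _).symm
  have hrho : ∀ u : V, rho src tgt m (fun e => if e ∈ A then 0 else mE e) u =
      rho src tgt m mE u - (∑ e ∈ A, g e u) / m u := by
    intro u
    unfold rho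
    rw [← sub_div]
    congr 1
    rw [eq_sub_iff_add_eq]
    have hA' : ∑ e ∈ A, g e u = ∑ e : E, if e ∈ A then g e u else 0 := by
      rw [Finset.sum_ite_mem, Finset.univ_inter]
    rw [hA']
    unfold edgeSumAt
    rw [← Finset.sum_add_distrib]
    apply Finset.sum_congr rfl
    intro e _
    by_cases he : e ∈ A
    · simp [he, hg]
    · simp [he]
  have hswap : (∑ u : V, (∑ e ∈ A, g e u) / m u) =
      ∑ e ∈ A, (mE e / m (src e) + mE e / m (tgt e)) := by
    simp_rw [Finset.sum_div]
    rw [Finset.sum_comm]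
    apply Finset.sum_congr rfl
    intro e _
    simp_rw [hg, add_div, Finset.sum_add_distrib]
    congr 1
    · have : ∀ u : V, (if src e = u then mE e else 0) / m u
          = (if src e = u then mE e / m u else 0) := by intro u; split <;> simp
      simp_rw [this]; simp
    · have : ∀ u : V, (if tgt e = u then mE e else 0) / m u
          = (if tgt e = u then mE e / m u else 0) := by intro u; split <;> simp
      simp_rw [this]; simp
  have hper : ∑ e ∈ A, (mE e / m (src e) + mE e / m (tgt e)) =
      (∑ e ∈ A, mE e) / m v₀ + ∑ e ∈ A, mE e / m (if src e = v₀ then tgt e else src e) := by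
    rw [Finset.sum_div, ← Finset.sum_add_distrib]
    apply Finset.sum_congr rfl
    intro e he
    by_cases hsrc : src e = v₀
    · rw [if_pos hsrc, hsrc]
    · have htgt : tgt e = v₀ := (hA e he).resolve_left hsrc
      rw [if_neg hsrc, htgt, add_comm]
  simp_rw [hrho, hsub, Finset.sum_sub_distrib]
  rw [hswap, hper]
  ring

end Aux


/-- For a centre vertex `v₀` with cycle edges `A`,
`Tr(Δ^{W⁻}) − Tr(Δ^{W⁺}) = ρ(v₀) − m(A)/m(v₀) − ∑_{e ∈ A} m_e/m((v₀)_e)`, where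
`W⁻ = (G − A, m)` (edge-virtualised) and `W⁺ = (G − {v₀}, m)` (principal submatrix
deleting the row and column of `v₀`). -/

theorem stmt16 {V E : Type*} [Fintype V] [Fintype E] [DecidableEq V] [DecidableEq E]
    (src tgt : E → V) (m : V → ℝ) (mE : E → ℝ)
    (hm : ∀ v, 0 < m v) (hmE : ∀ e, 0 < mE e)
    (v₀ : V) (A : Finset E)
    (hA : ∀ e ∈ A, src e = v₀ ∨ tgt e = v₀)
    (htree : isTreeAfter src tgt A) :
    ((dml src tgt m (fun e => if e ∈ A then 0 else mE e) (fun _ => 0)).trace).re -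
      (((dml src tgt m mE (fun _ => 0)).submatrix
          (fun v : {v : V // v ≠ v₀} => (v : V))
          (fun v : {v : V // v ≠ v₀} => (v : V))).trace).re =
      rho src tgt m mE v₀ - (∑ e ∈ A, mE e) / m v₀ -
        ∑ e ∈ A, mE e / m (if src e = v₀ then tgt e else src e) := by
  classical
  obtain ⟨hconn, hcard⟩ := htree
  have hnl : ∀ e : E, e ∉ A → src e ≠ tgt e := fun e he hl =>
    (no_loop_outside' src tgt A hconn hcard he hl).elim
  have h1 : ((dml src tgt m (fun e => if e ∈ A then 0 else mE e) (fun _ => 0)).trace) =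
      ((∑ u : V, rho src tgt m (fun e => if e ∈ A then 0 else mE e) u : ℝ) : ℂ) := by
    rw [Matrix.trace, Complex.ofReal_sum]
    apply Finset.sum_congr rfl
    intro u _
    apply dml_diag_eq'
    intro e hs ht
    by_cases he : e ∈ A
    · simp [he]
    · exact absurd (hs.trans ht.symm) (hnl e he)
  have h2 : (((dml src tgt m mE (fun _ => 0)).submatrix
        (fun v : {v : V // v ≠ v₀} => (v : V))
        (fun v : {v : V // v ≠ v₀} => (v : V))).trace) =
      ((∑ v : {v : V // v ≠ v₀}, rho src tgt m mE (v : V) : ℝ) : ℂ) := by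
    rw [Matrix.trace, Complex.ofReal_sum]
    apply Finset.sum_congr rfl
    intro v _
    show dml src tgt m mE (fun _ => 0) (v : V) (v : V) = _
    apply dml_diag_eq'
    intro e hs ht
    exfalso
    by_cases he : e ∈ A
    · rcases hA e he with h | h
      · exact v.2 (hs ▸ h ▸ rfl)
      · exact v.2 (ht ▸ h ▸ rfl)
    · exact hnl e he (hs.trans ht.symm)
  rw [h1, h2, Complex.ofReal_re, Complex.ofReal_re]
  exact real_alg' src tgt m mE v₀ A hA
end
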